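/- arXiv:1908.04060 — 3 statements merged into one kernel-verified Lean document; each statement's English description precedes it below -/
import Mathlib

section
/- Let A, B, R be square complex matrices of the same dimension with ‖AR‖ ≤ δ < 1/2 and A(B + R) = I. Then B is invertible and ‖A - B^{-1}‖ ≤ 2δ‖A‖. -/
open scoped Matrix.Norms.L2Operator

/- With `t = A R` we have `A B = 1 - t`, so `A B` is invertible (Neumann series) and, matrices being
Dedekind-finite, so is `B`. Multiplying on the right by `B⁻¹` gives `A = (1 - t) B⁻¹`, i.e.
`A - B⁻¹ = t (A - B⁻¹) - t A`; hence `(1 - ‖t‖) ‖A - B⁻¹‖ ≤ ‖t‖ ‖A‖`, and `1 - ‖t‖ > 1/2`. -/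

theorem sub_eq_mul_sub_sub_mul_of_mul_eq_one_sub {R : Type*} [Ring R] {a b c t : R}
    (hab : a * b = 1 - t) (hbc : b * c = 1) : a - c = t * (a - c) - t * a := by
  have ha : a = c - t * c := by
    rw [← mul_one a, ← hbc, ← mul_assoc, hab, sub_mul, one_mul]
  nth_rewrite 1 [ha]
  noncomm_ring

theorem one_sub_norm_mul_norm_sub_le_of_mul_eq_one_sub {R : Type*} [NormedRing R] {a b c t : R}
    (hab : a * b = 1 - t) (hbc : b * c = 1) : (1 - ‖t‖) * ‖a - c‖ ≤ ‖t‖ * ‖a‖ := by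
  have h : ‖a - c‖ ≤ ‖t‖ * ‖a - c‖ + ‖t‖ * ‖a‖ :=
    calc ‖a - c‖ = ‖t * (a - c) - t * a‖ := by
          rw [← sub_eq_mul_sub_sub_mul_of_mul_eq_one_sub hab hbc]
      _ ≤ ‖t * (a - c)‖ + ‖t * a‖ := norm_sub_le _ _
      _ ≤ ‖t‖ * ‖a - c‖ + ‖t‖ * ‖a‖ := add_le_add (norm_mul_le _ _) (norm_mul_le _ _)
  linarith

/-- If `‖A R‖ ≤ δ < 1/2` and `A (B + R) = I`, then `B` is invertible and
`‖A - B⁻¹‖ ≤ 2 δ ‖A‖`. -/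
theorem resolvent_perturbation {n : ℕ} (A B R : Matrix (Fin n) (Fin n) ℂ)
    (δ : ℝ) (hδ : δ < 1 / 2) (hAR : ‖A * R‖ ≤ δ)
    (hABR : A * (B + R) = 1) :
    IsUnit B ∧ ‖A - B⁻¹‖ ≤ 2 * δ * ‖A‖ := by
  have hAB : A * B = 1 - A * R := by rw [← hABR, mul_add, add_sub_cancel_right]
  have hB : IsUnit B :=
    isUnit_of_mul_isUnit_right (hAB ▸ isUnit_one_sub_of_norm_lt_one (by linarith))
  refine ⟨hB, ?_⟩
  have h := one_sub_norm_mul_norm_sub_le_of_mul_eq_one_sub hAB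
    (Matrix.mul_nonsing_inv B ((Matrix.isUnit_iff_isUnit_det B).mp hB))
  nlinarith [mul_le_mul_of_nonneg_right hAR (norm_nonneg A),
    mul_nonneg (sub_nonneg.mpr (hAR.trans hδ.le)) (norm_nonneg (A - B⁻¹))]
end

section
/- Let y₁,…,y_N ∈ ℝ, extended by y_{-i} = -y_i, and suppose sup_{η ≤ t ≤ 1} |m(E + it)| ≤ C_a where m(z) = (1/(2N))∑_{1≤|i|≤N} 1/(y_i - z) and η = N^{-1+a} for some a ∈ (0,1). Then (1/(2N)) ∑_{|y_i - E| ≥ η} 1/|y_i - E| ≤ 2C_a log N + 4. -/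
/-!
Since `Im (u - (E + it))⁻¹ = t / ((u - E)² + t²)` and `Im m ≤ |m|`, the hypothesis gives
`∑ⱼ ((yⱼ - E)² + t²)⁻¹ ≤ 2N C_a / t` for `t ∈ [η, 1]`; integrating over `[η, 1]` yields
`2N C_a log (1/η) = 2N C_a (1 - a) log N`. Each `x = yⱼ - E` with `|x| ≥ η` satisfies
`|x|⁻¹ ≤ 2 ∫_η^1 (x² + t²)⁻¹ dt + 1`, because `x² ≤ t²` on `[|x|, 1]` and
`∫_{|x|}^1 (2t²)⁻¹ dt = (|x|⁻¹ - 1) / 2`.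
-/

open intervalIntegral MeasureTheory Complex

theorem integral_inv_sq_of_pos {a b : ℝ} (ha : 0 < a) (hb : 0 < b) :
    ∫ t in a..b, (t ^ 2)⁻¹ = a⁻¹ - b⁻¹ := by
  have hpos : ∀ t ∈ Set.uIcc a b, 0 < t := fun t ht => (lt_min ha hb).trans_le ht.1
  have hderiv : ∀ t ∈ Set.uIcc a b, HasDerivAt (fun s : ℝ => -s⁻¹) (t ^ 2)⁻¹ t := fun t ht => by
    have := (hasDerivAt_inv (hpos t ht).ne').neg
    rwa [neg_neg] at this
  have hint : IntervalIntegrable (fun t : ℝ => (t ^ 2)⁻¹) volume a b :=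
    ContinuousOn.intervalIntegrable <| (continuousOn_pow 2).inv₀ fun t ht =>
      (pow_pos (hpos t ht) 2).ne'
  rw [integral_eq_sub_of_hasDerivAt hderiv hint]
  ring

theorem inv_abs_le_two_mul_integral_add_one {x η : ℝ} (hη0 : 0 < η) (hη1 : η ≤ 1)
    (hx : η ≤ |x|) : |x|⁻¹ ≤ 2 * (∫ t in η..1, (x ^ 2 + t ^ 2)⁻¹) + 1 := by
  have hx0 : 0 < |x| := hη0.trans_le hx
  have hx2 : 0 < x ^ 2 := by rw [← sq_abs]; positivity
  have hcont : Continuous fun t : ℝ => (x ^ 2 + t ^ 2)⁻¹ :=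
    Continuous.inv₀ (by fun_prop) fun t => (add_pos_of_pos_of_nonneg hx2 (sq_nonneg t)).ne'
  have hnonneg : ∀ {c d : ℝ}, c ≤ d → 0 ≤ ∫ t in c..d, (x ^ 2 + t ^ 2)⁻¹ := fun hc =>
    integral_nonneg (μ := volume) hc fun t _ => by positivity
  rcases le_or_gt 1 |x| with h1 | h1
  · have : |x|⁻¹ ≤ 1 := inv_le_one_of_one_le₀ h1
    linarith [hnonneg hη1]
  · have hsplit := integral_add_adjacent_intervals (hcont.intervalIntegrable (μ := volume) η |x|)
      (hcont.intervalIntegrable |x| 1)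
    have hcompare : ∫ t in |x|..1, (2 * t ^ 2)⁻¹ ≤ ∫ t in |x|..1, (x ^ 2 + t ^ 2)⁻¹ := by
      refine integral_mono_on h1.le ?_ (hcont.intervalIntegrable _ _) fun t ht => ?_
      · refine ContinuousOn.intervalIntegrable <| ContinuousOn.inv₀ (by fun_prop) fun t ht => ?_
        have : 0 < t := hx0.trans_le (Set.uIcc_of_le h1.le ▸ ht).1
        positivity
      · have ht0 : 0 < t := hx0.trans_le ht.1
        have : x ^ 2 ≤ t ^ 2 := by simpa [sq_abs] using pow_le_pow_left₀ hx0.le ht.1 2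
        gcongr
        linarith
    have hval : ∫ t in |x|..1, (2 * t ^ 2)⁻¹ = (|x|⁻¹ - 1) / 2 := by
      simp_rw [mul_inv, intervalIntegral.integral_const_mul, integral_inv_sq_of_pos hx0 one_pos]
      ring
    linarith [hnonneg hx]

theorem im_inv_ofReal_sub (u : ℝ) (z : ℂ) :
    ((u : ℂ) - z)⁻¹.im = z.im / ((u - z.re) ^ 2 + z.im ^ 2) := by
  simp [inv_im, normSq_apply]
  ring

theorem im_sum_inv_ofReal_sub_eq {ι : Type*} [Fintype ι] (u : ι → ℝ) (E t : ℝ) :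
    (∑ j, ((u j : ℂ) - (E + t * I))⁻¹).im = t * ∑ j, ((u j - E) ^ 2 + t ^ 2)⁻¹ := by
  rw [im_sum, Finset.mul_sum]
  refine Finset.sum_congr rfl fun j _ => ?_
  rw [im_inv_ofReal_sub]
  simp [div_eq_mul_inv]

theorem sum_inv_abs_sub_le_of_im_le {ι : Type*} [Fintype ι] (u : ι → ℝ) {E η C : ℝ}
    (hη0 : 0 < η) (hη1 : η ≤ 1)
    (hC : ∀ t ∈ Set.Icc η 1, (∑ j, ((u j : ℂ) - (E + t * I))⁻¹).im ≤ C) :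
    ∑ j, (if η ≤ |u j - E| then 1 / |u j - E| else 0)
      ≤ 2 * (C * Real.log (1 / η)) + Fintype.card ι := by
  set f : ι → ℝ → ℝ := fun j t => ((u j - E) ^ 2 + t ^ 2)⁻¹
  have hfint : ∀ j, IntervalIntegrable (f j) volume η 1 := fun j =>
    ContinuousOn.intervalIntegrable <| ContinuousOn.inv₀ (by fun_prop) fun t ht => by
      have : 0 < t := hη0.trans_le (Set.uIcc_of_le hη1 ▸ ht).1
      positivity
  have hterm : ∀ j, (if η ≤ |u j - E| then 1 / |u j - E| else 0) ≤ 2 * (∫ t in η..1, f j t) + 1 :=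
    fun j => by
      split_ifs with hj
      · simpa only [one_div] using inv_abs_le_two_mul_integral_add_one hη0 hη1 hj
      · have : 0 ≤ ∫ t in η..1, f j t := integral_nonneg hη1 fun t _ => by positivity
        linarith
  have hpointwise : ∀ t ∈ Set.Icc η 1, ∑ j, f j t ≤ C * t⁻¹ := fun t ht => by
    have ht0 : 0 < t := hη0.trans_le ht.1
    have := hC t ht
    rw [im_sum_inv_ofReal_sub_eq] at this
    rw [le_mul_inv_iff₀ ht0, mul_comm]
    exact this
  have hintegral : ∫ t in η..1, ∑ j, f j t ≤ C * Real.log (1 / η) := by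
    rw [← integral_inv_of_pos hη0 one_pos, ← intervalIntegral.integral_const_mul]
    have hsumint : IntervalIntegrable (fun t => ∑ j, f j t) volume η 1 := by
      simpa only [← Finset.sum_apply] using IntervalIntegrable.sum _ fun j _ => hfint j
    have hinvint : IntervalIntegrable (fun t => C * t⁻¹) volume η 1 :=
      ContinuousOn.intervalIntegrable <| continuousOn_const.mul <|
        continuousOn_inv₀.mono fun t ht => (hη0.trans_le (Set.uIcc_of_le hη1 ▸ ht).1).ne'
    exact integral_mono_on hη1 hsumint hinvint hpointwise
  calc ∑ j, (if η ≤ |u j - E| then 1 / |u j - E| else 0)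
      ≤ ∑ j, (2 * (∫ t in η..1, f j t) + 1) := Finset.sum_le_sum fun j _ => hterm j
    _ = 2 * (∫ t in η..1, ∑ j, f j t) + Fintype.card ι := by
      rw [Finset.sum_add_distrib, ← Finset.mul_sum, integral_finsetSum fun j _ => hfint j]
      simp
    _ ≤ 2 * (C * Real.log (1 / η)) + Fintype.card ι := by linarith

theorem empirical_sum_inv_bound_general (N : ℕ) (hN : 2 ≤ N)
    (a : ℝ) (ha : 0 < a) (ha1 : a < 1) (Ca : ℝ) (hCa : 0 < Ca) (E : ℝ)
    (η : ℝ) (hη : η = (N : ℝ) ^ (-1 + a : ℝ))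
    (ysym : Fin N ⊕ Fin N → ℝ)
    (hm : ∀ t : ℝ, η ≤ t → t ≤ 1 →
      ‖((1 / (2 * (N : ℂ))) *
        ∑ j : Fin N ⊕ Fin N, ((ysym j : ℂ) - (E + t * Complex.I))⁻¹)‖ ≤ Ca) :
    (1 / (2 * (N : ℝ))) *
        ∑ j : Fin N ⊕ Fin N, (if η ≤ |ysym j - E| then 1 / |ysym j - E| else 0)
      ≤ 2 * Ca * Real.log N + 4 := by
  have hN0 : (0 : ℝ) < N := by positivity
  have hη0 : 0 < η := hη ▸ Real.rpow_pos_of_pos hN0 _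
  have hη1 : η ≤ 1 :=
    hη ▸ Real.rpow_le_one_of_one_le_of_nonpos (by norm_cast; omega) (by linarith)
  have hlog : Real.log (1 / η) = (1 - a) * Real.log N := by
    rw [one_div, Real.log_inv, hη, Real.log_rpow hN0]
    ring
  have hIm : ∀ t ∈ Set.Icc η 1,
      (∑ j, ((ysym j : ℂ) - (E + t * I))⁻¹).im ≤ 2 * N * Ca := fun t ht => by
    have := (abs_im_le_norm _).trans (hm t ht.1 ht.2)
    rw [← ofReal_natCast, one_div, ← ofReal_ofNat, ← ofReal_mul, ← ofReal_inv, im_ofReal_mul,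
      abs_mul, abs_of_pos (by positivity), inv_mul_le_iff₀ (by positivity)] at this
    exact (le_abs_self _).trans this
  have hsum := sum_inv_abs_sub_le_of_im_le ysym hη0 hη1 hIm
  rw [hlog, Fintype.card_sum, Fintype.card_fin] at hsum
  have hlogN : 0 ≤ Real.log N := Real.log_nonneg (by norm_cast; omega)
  rw [one_div, inv_mul_le_iff₀ (by positivity)]
  push_cast at hsum
  nlinarith [mul_nonneg (mul_nonneg hCa.le hlogN) ha.le]

/-- If the symmetrized Stieltjes transform
`m(z) = (1/(2N)) ∑_{1 ≤ |i| ≤ N} (y_i - z)⁻¹` (with `y_{-i} = -y_i`) satisfies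
`|m(E + it)| ≤ C_a` for all `t ∈ [η, 1]` with `η = N^{-1+a}`, then
`(1/(2N)) ∑_{|y_i - E| ≥ η} |y_i - E|⁻¹ ≤ 2 C_a log N + 4`. -/
theorem empirical_sum_inv_bound (N : ℕ) (hN : 2 ≤ N) (y : Fin N → ℝ)
    (a : ℝ) (ha : 0 < a) (ha1 : a < 1) (Ca : ℝ) (hCa : 0 < Ca) (E : ℝ)
    (η : ℝ) (hη : η = (N : ℝ) ^ (-1 + a : ℝ))
    (ysym : Fin N ⊕ Fin N → ℝ) (hysym : ysym = Sum.elim y (fun i => -y i))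
    (hm : ∀ t : ℝ, η ≤ t → t ≤ 1 →
      ‖((1 / (2 * (N : ℂ))) *
        ∑ j : Fin N ⊕ Fin N, ((ysym j : ℂ) - (E + t * Complex.I))⁻¹)‖ ≤ Ca) :
    (1 / (2 * (N : ℝ))) *
        ∑ j : Fin N ⊕ Fin N, (if η ≤ |ysym j - E| then 1 / |ysym j - E| else 0)
      ≤ 2 * Ca * Real.log N + 4 :=
  empirical_sum_inv_bound_general N hN a ha ha1 Ca hCa E η hη ysym hm
end

section
/- Let η > 0 and w_α, w_β ∈ ℂ⁺, and suppose real numbers p̃, q̃ ≥ 0 satisfy the system Im w_α = (η + Im w_β)·p̃ and Im w_β = (η + Im w_α)·q̃. Then p̃·q̃ = (Im w_α · Im w_β) / ((η + Im w_α)(η + Im w_β)) < 1, and moreover 1/(1 - p̃q̃) ≤ 1 + min(Im w_α, Im w_β)/η. -/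
/-- If `Im w_α = (η + Im w_β) p̃` and `Im w_β = (η + Im w_α) q̃` with `η > 0` and
`Im w_α, Im w_β > 0`, then
`p̃ q̃ = (Im w_α Im w_β)/((η + Im w_α)(η + Im w_β)) < 1` and
`1/(1 - p̃ q̃) ≤ 1 + min(Im w_α, Im w_β)/η`. -/
theorem subordination_stability (η : ℝ) (hη : 0 < η) (wa wb : ℂ)
    (hwa : 0 < wa.im) (hwb : 0 < wb.im) (pt qt : ℝ) (hpt : 0 ≤ pt) (hqt : 0 ≤ qt)
    (h1 : wa.im = (η + wb.im) * pt) (h2 : wb.im = (η + wa.im) * qt) :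
    pt * qt = (wa.im * wb.im) / ((η + wa.im) * (η + wb.im)) ∧ pt * qt < 1 ∧
      1 / (1 - pt * qt) ≤ 1 + min wa.im wb.im / η := by
  set a := wa.im with ha'
  set b := wb.im with hb'
  have ha1 : (0:ℝ) < η + a := by linarith
  have hb1 : (0:ℝ) < η + b := by linarith
  have hpt' : pt = a / (η + b) := by
    field_simp
    linarith [h1]
  have hqt' : qt = b / (η + a) := by
    field_simp
    linarith [h2]
  have heq : pt * qt = (a * b) / ((η + a) * (η + b)) := by
    rw [hpt', hqt']
    field_simp
  have hlt : pt * qt < 1 := by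
    rw [heq, div_lt_one (by positivity)]
    nlinarith
  have hpos : 0 < 1 - pt * qt := by linarith
  refine ⟨heq, hlt, ?_⟩
  have hsub : 1 - pt * qt = η * (η + a + b) / ((η + a) * (η + b)) := by
    rw [heq]
    field_simp
    ring
  rw [hsub, one_div_div]
  have key1 : (1 + a / η) * (η * (η + a + b)) = (η + a) * (η + a + b) := by
    field_simp
  have key2 : (1 + b / η) * (η * (η + a + b)) = (η + b) * (η + a + b) := by
    field_simp
  rcases min_cases a b with ⟨hm, hab⟩ | ⟨hm, hab⟩ <;> rw [hm] <;>
    rw [div_le_iff₀ (by positivity)] <;> [rw [key1]; rw [key2]] <;> nlinarith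
end
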